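/- (Preliminary regularity lemma.) For every positive integer n, every m > 0, every ε > 0 and every growth function F there exists C = C(n, ε, m, F) > 0 with the following property. Let V = (J, (V_j)_{j∈J}, d, H_d) be a hypergraph system with |J| ≤ n, and for each e ∈ H_d let B_e ⊆ A_e be a σ-algebra with complex(B_e) ≤ m. Then there exists M with F(m) ≤ M ≤ C, and for each f ∈ ∂H_d there exist σ-algebras B_f ⊆ B'_f ⊆ A_f, such that: complex(B_f) ≤ M for all f ∈ ∂H_d; ℰ_{E_e}(∨_{f∈∂e} B'_f) − ℰ_{E_e}(∨_{f∈∂e} B_f) ≤ ε² for all e ∈ H_d and all E_e ∈ B_e; and Δ_e(E_e | ∨_{f∈∂e} B'_f) ≤ 1/F(M) for all e ∈ H_d and all E_e ∈ B_e. -/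

import Mathlib

open scoped Classical BigOperators MeasureTheory

noncomputable section

/-- Average of a real-valued function over a finite type. -/
def avg {α : Type*} [Fintype α] (f : α → ℝ) : ℝ :=
  (∑ x, f x) / (Fintype.card α)

/-- Real-valued indicator function of a set. -/
def ind {α : Type*} (E : Set α) (x : α) : ℝ := if x ∈ E then 1 else 0

/-- Average of `f` over the set `A`. -/
def avgOn {α : Type*} [Fintype α] (A : Set α) (f : α → ℝ) : ℝ :=
  (∑ x ∈ Finset.univ.filter (· ∈ A), f x) / ((Finset.univ.filter (· ∈ A)).card)

/-- The smallest set of the σ-algebra `m` containing `x`. -/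
def atomAt {α : Type*} (m : MeasurableSpace α) (x : α) : Set α :=
  ⋂₀ {s | MeasurableSet[m] s ∧ x ∈ s}

/-- Conditional expectation: the average of `f` over the smallest `m`-set containing `x`. -/
def cexp {α : Type*} [Fintype α] (m : MeasurableSpace α) (f : α → ℝ) (x : α) : ℝ :=
  avgOn (atomAt m x) f

/-- The `E`-energy of a σ-algebra. -/
def energy {α : Type*} [Fintype α] (E : Set α) (m : MeasurableSpace α) : ℝ :=
  avg (fun x => (cexp m (ind E) x) ^ 2)

/-- Complexity: the least number of sets needed to generate `m` as a σ-algebra. -/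
def complexity {α : Type*} (m : MeasurableSpace α) : ℕ :=
  sInf {n | ∃ S : Finset (Set α), S.card = n ∧ MeasurableSpace.generateFrom (↑S : Set (Set α)) = m}

/-- The σ-algebra `A_e` of sets depending only on the coordinates indexed by `e`. -/
def cylAlg {J : Type*} (V : J → Type*) (e : Finset J) : MeasurableSpace (∀ j, V j) :=
  MeasurableSpace.comap (fun x (j : e) => x j.1) ⊤

/-- The skeleton `∂e = {f ⊊ e : |f| = |e| - 1}`. -/
def skel {J : Type*} (e : Finset J) : Finset (Finset J) :=
  e.image (fun j => e.erase j)

/-- The boundary `∂H` of a hypergraph. -/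
def hbd {J : Type*} (H : Finset (Finset J)) : Finset (Finset J) :=
  H.biUnion skel

/-- The `e`-discrepancy of `E` relative to the σ-algebra `m`. -/
def disc {J : Type*} [Fintype J] (V : J → Type*) [∀ j, Fintype (V j)]
    (e : Finset J) (E : Set (∀ j, V j)) (m : MeasurableSpace (∀ j, V j)) : ℝ :=
  sSup { r | ∃ Ef : Finset J → Set (∀ j, V j),
    (∀ f ∈ skel e, MeasurableSet[cylAlg V f] (Ef f)) ∧
    r = |avg (fun x => (ind E x - cexp m (ind E) x) * ∏ f ∈ skel e, ind (Ef f) x)| }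

/-- A growth function: increasing on positives and at least `1 + x`. -/
def IsGrowth (F : ℝ → ℝ) : Prop :=
  (∀ x y, 0 < x → x < y → F x < F y) ∧ ∀ x, 0 < x → 1 + x ≤ F x

/-- An atom of a σ-algebra on a finite set: a minimal non-empty measurable set. -/
def IsAtomOf {α : Type*} (m : MeasurableSpace α) (A : Set α) : Prop :=
  MeasurableSet[m] A ∧ A.Nonempty ∧ ∀ s, MeasurableSet[m] s → s ⊆ A → s = ∅ ∨ s = A

end

/-!
Energy increment. For a family `B` of σ-algebras on the faces `f ∈ ∂H` the total energy
`Φ(B) = ∑_{e ∈ H} ∑_{E ∈ B_e} ℰ_E(∨_{f ∈ ∂e} B_f)` is monotone in `B` and at most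
`2^n · 2^(2^m)`, because a σ-algebra of complexity `k` has at most `2^(2^k)` sets. Since
`1_E − E(1_E|B)` is orthogonal to every `B`-measurable function, Cauchy–Schwarz shows that a
witness `(E_f)_{f ∈ ∂e}` of discrepancy `> η` refines the `B_f` by one set each and raises `Φ`
by at least `η²`. Hence at most `Φmax/η²` refinements make all discrepancies `≤ η`. Run this with
`η = 1/F(M)` from the current coarse family of complexity `M`: either the energy gain is
`≤ ε²` for every `E`, and we stop, or `Φ` itself grew by `ε²`, which happens at most
`Φmax/ε²` times.
-/

open MeasurableSpace Finset

/-- Improving a bad state raises the bounded potential `Φ` by `δ`; `k` counts the improvements. -/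
theorem exists_le_floor_div_of_increment {β : Type*} (Φ : β → ℝ) {Φmax δ : ℝ} (hδ : 0 < δ)
    (hΦ : ∀ b, Φ b ≤ Φmax) (P Q : ℕ → β → Prop)
    (hstep : ∀ k b, P k b → ¬ Q k b → ∃ b', P (k + 1) b' ∧ Φ b + δ ≤ Φ b')
    {b₀ : β} (h₀ : P 0 b₀) (hΦ₀ : 0 ≤ Φ b₀) :
    ∃ k ≤ ⌊Φmax / δ⌋₊, ∃ b, P k b ∧ Q k b := by
  have key : ∀ N : ℕ, ∀ k b, P k b → k * δ ≤ Φ b → Φmax < Φ b + N * δ →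
      ∃ k b, P k b ∧ k * δ ≤ Φ b ∧ Q k b := by
    intro N
    induction N with
    | zero =>
      intro k b _ _ hlt
      rw [Nat.cast_zero, zero_mul, add_zero] at hlt
      linarith [hΦ b]
    | succ N ih =>
      intro k b hP hk hlt
      by_cases hQ : Q k b
      · exact ⟨k, b, hP, hk, hQ⟩
      obtain ⟨b', hP', hb'⟩ := hstep k b hP hQ
      exact ih (k + 1) b' hP' (by push_cast; linarith) (by push_cast at hlt; linarith)
  have hN : Φmax < Φ b₀ + (⌊Φmax / δ⌋₊ + 1 : ℕ) * δ := by
    have := (div_lt_iff₀ hδ).1 (Nat.lt_floor_add_one (Φmax / δ))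
    push_cast
    linarith
  obtain ⟨k, b, hP, hk, hQ⟩ := key _ 0 b₀ h₀ (by simpa using hΦ₀) hN
  exact ⟨k, Nat.le_floor ((le_div_iff₀ hδ).2 (hk.trans (hΦ b))), b, hP, hQ⟩

section Atoms

variable {α : Type*} {m m' : MeasurableSpace α} {x y : α}

lemma mem_atomAt_self (m : MeasurableSpace α) (x : α) : x ∈ atomAt m x :=
  fun _ hs => hs.2

lemma atomAt_subset {s : Set α} (hs : MeasurableSet[m] s) (hx : x ∈ s) : atomAt m x ⊆ s :=
  Set.sInter_subset_of_mem ⟨hs, hx⟩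

lemma mem_iff_of_mem_atomAt (h : y ∈ atomAt m x) {s : Set α} (hs : MeasurableSet[m] s) :
    y ∈ s ↔ x ∈ s :=
  ⟨fun hy => by_contra fun hx => atomAt_subset hs.compl hx h hy, fun hx => atomAt_subset hs hx h⟩

lemma atomAt_eq_of_mem (h : y ∈ atomAt m x) : atomAt m y = atomAt m x :=
  Set.Subset.antisymm (Set.subset_sInter fun _ hs => atomAt_subset hs.1 (h _ hs))
    (Set.subset_sInter fun _ hs => atomAt_subset hs.1 ((mem_iff_of_mem_atomAt h hs.1).1 hs.2))

lemma atomAt_anti (hm : m ≤ m') (x : α) : atomAt m' x ⊆ atomAt m x :=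
  Set.sInter_subset_sInter fun _ hs => ⟨hm _ hs.1, hs.2⟩

lemma ind_nonneg (E : Set α) (x : α) : 0 ≤ ind E x := by
  unfold ind; split <;> norm_num

lemma ind_le_one (E : Set α) (x : α) : ind E x ≤ 1 := by
  unfold ind; split <;> norm_num

/-- On a finite space this is `m`-measurability. -/
def ConstOnAtoms (m : MeasurableSpace α) (g : α → ℝ) : Prop :=
  ∀ x, ∀ y ∈ atomAt m x, g y = g x

lemma ConstOnAtoms.mono {g : α → ℝ} (hg : ConstOnAtoms m g) (hm : m ≤ m') : ConstOnAtoms m' g :=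
  fun x y hy => hg x y (atomAt_anti hm x hy)

lemma constOnAtoms_ind {E : Set α} (hE : MeasurableSet[m] E) : ConstOnAtoms m (ind E) :=
  fun _ _ hy => by simp only [ind, mem_iff_of_mem_atomAt hy hE]

lemma constOnAtoms_prod {ι : Type*} (s : Finset ι) {g : ι → α → ℝ}
    (hg : ∀ i ∈ s, ConstOnAtoms m (g i)) : ConstOnAtoms m fun x => ∏ i ∈ s, g i x :=
  fun x y hy => prod_congr rfl fun i hi => hg i hi x y hy

lemma constOnAtoms_cexp [Fintype α] (m : MeasurableSpace α) (f : α → ℝ) :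
    ConstOnAtoms m (cexp m f) :=
  fun _ _ hy => by rw [cexp, cexp, atomAt_eq_of_mem hy]

end Atoms

section CondExp

variable {α : Type*} [Fintype α] {m m' : MeasurableSpace α}

lemma avg_eq_expect (f : α → ℝ) : avg f = 𝔼 x, f x :=
  (Fintype.expect_eq_sum_div_card f).symm

lemma expect_le_one {f : α → ℝ} (h : ∀ x, f x ≤ 1) : 𝔼 x, f x ≤ 1 := by
  rw [Fintype.expect_eq_sum_div_card]
  exact div_le_one_of_le₀ ((sum_le_sum fun x _ => h x).trans (by simp)) (Nat.cast_nonneg _)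

lemma cexp_ind_nonneg (m : MeasurableSpace α) (E : Set α) (x : α) : 0 ≤ cexp m (ind E) x :=
  div_nonneg (sum_nonneg fun y _ => ind_nonneg E y) (Nat.cast_nonneg _)

lemma cexp_ind_le_one (m : MeasurableSpace α) (E : Set α) (x : α) : cexp m (ind E) x ≤ 1 :=
  div_le_one_of_le₀ ((sum_le_sum fun y _ => ind_le_one E y).trans (by simp)) (Nat.cast_nonneg _)

lemma cexp_mul_of_constOnAtoms {g : α → ℝ} (hg : ConstOnAtoms m g) (f : α → ℝ) (x : α) :
    cexp m f x * g x = cexp m (fun y => f y * g y) x := by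
  rw [cexp, cexp, avgOn, avgOn, div_mul_eq_mul_div, sum_mul]
  congr 1
  exact sum_congr rfl fun y hy => by rw [hg x y (mem_filter.1 hy).2]

theorem sum_cexp (m : MeasurableSpace α) (f : α → ℝ) : ∑ x, cexp m f x = ∑ x, f x := by
  rw [← sum_fiberwise univ (atomAt m), ← sum_fiberwise univ (atomAt m) f]
  refine sum_congr rfl fun A _ => ?_
  rcases (univ.filter fun x => atomAt m x = A).eq_empty_or_nonempty with hA | ⟨x₀, hx₀⟩
  · simp only [hA, sum_empty]
  obtain rfl := (mem_filter.1 hx₀).2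
  have hfiber :
      (univ.filter fun x => atomAt m x = atomAt m x₀) = univ.filter (· ∈ atomAt m x₀) := by
    ext y
    simp only [mem_filter, mem_univ, true_and]
    exact ⟨fun h => h ▸ mem_atomAt_self m y, atomAt_eq_of_mem⟩
  have hcard : (#(univ.filter (· ∈ atomAt m x₀)) : ℝ) ≠ 0 := by
    exact_mod_cast (card_pos.2 ⟨x₀, by simpa using mem_atomAt_self m x₀⟩).ne'
  rw [sum_congr rfl fun x hx => by rw [cexp, (mem_filter.1 hx).2], hfiber, sum_const,
    nsmul_eq_mul, avgOn, mul_div_cancel₀ _ hcard]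

theorem expect_cexp_mul {g : α → ℝ} (hg : ConstOnAtoms m g) (f : α → ℝ) :
    𝔼 x, cexp m f x * g x = 𝔼 x, f x * g x := by
  simp only [Fintype.expect_eq_sum_div_card, cexp_mul_of_constOnAtoms hg, sum_cexp]

theorem expect_cexp_sq_sub (hm : m ≤ m') (f : α → ℝ) :
    𝔼 x, cexp m' f x ^ 2 - 𝔼 x, cexp m f x ^ 2 = 𝔼 x, (cexp m' f x - cexp m f x) ^ 2 := by
  have hc' := expect_cexp_mul ((constOnAtoms_cexp m f).mono hm) f
  have hc := expect_cexp_mul (constOnAtoms_cexp m f) f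
  have hsq : ∀ x, (cexp m' f x - cexp m f x) ^ 2 = (cexp m' f x ^ 2 - cexp m f x ^ 2)
      - 2 * (cexp m' f x * cexp m f x - cexp m f x * cexp m f x) := fun x => by ring
  simp_rw [hsq, expect_sub_distrib, ← mul_expect, expect_sub_distrib, hc', hc]
  ring

/-- Cauchy–Schwarz against `cexp m' f - cexp m f`, to which `f - cexp m f` reduces on
`m'`-measurable functions. -/
theorem sq_expect_sub_cexp_mul_le (hm : m ≤ m') (f : α → ℝ) {g : α → ℝ}
    (hg : ConstOnAtoms m' g) (hg₁ : ∀ x, |g x| ≤ 1) :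
    (𝔼 x, (f x - cexp m f x) * g x) ^ 2 ≤ 𝔼 x, cexp m' f x ^ 2 - 𝔼 x, cexp m f x ^ 2 := by
  have hcorr : 𝔼 x, (f x - cexp m f x) * g x = 𝔼 x, (cexp m' f x - cexp m f x) * g x := by
    simp_rw [sub_mul, expect_sub_distrib, expect_cexp_mul hg]
  rw [hcorr, expect_cexp_sq_sub hm]
  calc _ ≤ (𝔼 x, (cexp m' f x - cexp m f x) ^ 2) * 𝔼 x, g x ^ 2 :=
        expect_mul_sq_le_sq_mul_sq _ _ _
    _ ≤ 𝔼 x, (cexp m' f x - cexp m f x) ^ 2 :=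
        mul_le_of_le_one_right (expect_nonneg fun _ _ => sq_nonneg _)
          (expect_le_one fun x => (sq_le_one_iff_abs_le_one _).2 (hg₁ x))

lemma energy_eq_expect (E : Set α) (m : MeasurableSpace α) :
    energy E m = 𝔼 x, cexp m (ind E) x ^ 2 :=
  avg_eq_expect _

lemma energy_nonneg (E : Set α) (m : MeasurableSpace α) : 0 ≤ energy E m := by
  rw [energy_eq_expect]
  exact expect_nonneg fun _ _ => sq_nonneg _

lemma energy_le_one (E : Set α) (m : MeasurableSpace α) : energy E m ≤ 1 := by
  rw [energy_eq_expect]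
  exact expect_le_one fun x => pow_le_one₀ (cexp_ind_nonneg m E x) (cexp_ind_le_one m E x)

theorem energy_mono (hm : m ≤ m') (E : Set α) : energy E m ≤ energy E m' := by
  rw [energy_eq_expect, energy_eq_expect, ← sub_nonneg, expect_cexp_sq_sub hm]
  exact expect_nonneg fun _ _ => sq_nonneg _

theorem sq_avg_add_energy_le (hm : m ≤ m') (E : Set α) {g : α → ℝ} (hg : ConstOnAtoms m' g)
    (hg₁ : ∀ x, |g x| ≤ 1) :
    avg (fun x => (ind E x - cexp m (ind E) x) * g x) ^ 2 + energy E m ≤ energy E m' := by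
  have := sq_expect_sub_cexp_mul_le hm (ind E) hg hg₁
  rw [avg_eq_expect, energy_eq_expect, energy_eq_expect]
  linarith

end CondExp

section Complexity

variable {α : Type*}

lemma complexity_le_card {m : MeasurableSpace α} (S : Finset (Set α))
    (h : generateFrom (S : Set (Set α)) = m) : complexity m ≤ #S :=
  Nat.sInf_le ⟨S, rfl, h⟩

lemma complexity_bot : complexity (⊥ : MeasurableSpace α) = 0 :=
  Nat.eq_zero_of_le_zero (complexity_le_card ∅ (by simp))

variable [Fintype α]

lemma exists_card_eq_complexity (m : MeasurableSpace α) :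
    ∃ S : Finset (Set α), #S = complexity m ∧ generateFrom (S : Set (Set α)) = m :=
  Nat.sInf_mem (s := {n | ∃ S : Finset (Set α), #S = n ∧ generateFrom (S : Set (Set α)) = m})
    ⟨_, univ.filter (MeasurableSet[m] ·), rfl, by simp⟩

lemma complexity_sup_generateFrom_singleton_le (m : MeasurableSpace α) (E : Set α) :
    complexity (m ⊔ generateFrom {E}) ≤ complexity m + 1 := by
  obtain ⟨S, hcard, hgen⟩ := exists_card_eq_complexity m
  have hgen' : generateFrom (insert E S : Finset (Set α)) = m ⊔ generateFrom {E} := by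
    rw [coe_insert, Set.insert_eq, ← generateFrom_sup_generateFrom, hgen, sup_comm]
  exact (complexity_le_card _ hgen').trans (hcard ▸ card_insert_le _ _)

/-- The sets of `m` are unions of cells of the partition cut out by `complexity m` generators. -/
theorem card_measurableSet_le (m : MeasurableSpace α) :
    #(univ.filter (MeasurableSet[m] ·)) ≤ 2 ^ 2 ^ complexity m := by
  obtain ⟨S, hcard, hgen⟩ := exists_card_eq_complexity m
  let σ : α → (S → Prop) := fun x s => x ∈ (s : Set α)
  have hle : m ≤ MeasurableSpace.comap σ ⊤ :=
    hgen ▸ generateFrom_le fun t ht => ⟨{g | g ⟨t, ht⟩}, trivial, rfl⟩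
  have himage :
      univ.filter (MeasurableSet[m] ·) ⊆ univ.image fun T : Set (S → Prop) => σ ⁻¹' T := by
    intro t ht
    obtain ⟨T, -, hT⟩ := hle t (mem_filter.1 ht).2
    exact mem_image.2 ⟨T, mem_univ T, hT⟩
  calc #(univ.filter (MeasurableSet[m] ·))
      ≤ #(univ : Finset (Set (S → Prop))) := (card_le_card himage).trans card_image_le
    _ = 2 ^ 2 ^ complexity m := by
      rw [card_univ, Fintype.card_set, Fintype.card_fun, Fintype.card_prop, Fintype.card_coe,
        hcard]

end Complexity

lemma sum_add_le_sum_of_mem {ι : Type*} {s : Finset ι} {u v : ι → ℝ} {i : ι} (hi : i ∈ s)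
    (huv : ∀ j ∈ s, u j ≤ v j) {δ : ℝ} (h : u i + δ ≤ v i) : ∑ j ∈ s, u j + δ ≤ ∑ j ∈ s, v j := by
  have := single_le_sum (f := fun j => v j - u j) (fun j hj => sub_nonneg.2 (huv j hj)) hi
  rw [sum_sub_distrib] at this
  linarith

section Refinement

variable {J Ω : Type*} {B B' Be : Finset J → MeasurableSpace Ω} {e : Finset J}
  {Ef : Finset J → Set Ω}

noncomputable def refineSkel (B : Finset J → MeasurableSpace Ω) (e : Finset J)
    (Ef : Finset J → Set Ω) : Finset J → MeasurableSpace Ω :=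
  fun f => if f ∈ skel e then B f ⊔ generateFrom {Ef f} else B f

lemma le_refineSkel (f : Finset J) : B f ≤ refineSkel B e Ef f := by
  unfold refineSkel
  split_ifs
  exacts [le_sup_left, le_rfl]

lemma refineSkel_le {A : MeasurableSpace Ω} {f : Finset J} (hB : B f ≤ A)
    (hEf : f ∈ skel e → MeasurableSet[A] (Ef f)) : refineSkel B e Ef f ≤ A := by
  unfold refineSkel
  split_ifs with hf
  exacts [sup_le hB (generateFrom_le fun _ ht => Set.mem_singleton_iff.1 ht ▸ hEf hf), hB]

lemma complexity_refineSkel_le [Fintype Ω] (f : Finset J) :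
    complexity (refineSkel B e Ef f) ≤ complexity (B f) + 1 := by
  unfold refineSkel
  split_ifs
  exacts [complexity_sup_generateFrom_singleton_le _ _, Nat.le_succ _]

lemma constOnAtoms_prod_ind_refineSkel :
    ConstOnAtoms (⨆ f ∈ skel e, refineSkel B e Ef f) fun x => ∏ f ∈ skel e, ind (Ef f) x := by
  refine constOnAtoms_prod _ fun f hf => constOnAtoms_ind ?_
  refine le_iSup₂ (f := fun f (_ : f ∈ skel e) => refineSkel B e Ef f) f hf _ ?_
  rw [refineSkel, if_pos hf]
  exact le_sup_right (a := B f) _ (measurableSet_generateFrom rfl)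

variable [Fintype Ω]

theorem sq_avg_add_energy_le_refineSkel (E : Set Ω) :
    avg (fun x => (ind E x - cexp (⨆ f ∈ skel e, B f) (ind E) x) * ∏ f ∈ skel e, ind (Ef f) x) ^ 2
      + energy E (⨆ f ∈ skel e, B f) ≤ energy E (⨆ f ∈ skel e, refineSkel B e Ef f) := by
  refine sq_avg_add_energy_le (iSup₂_mono fun f _ => le_refineSkel f) E
    constOnAtoms_prod_ind_refineSkel fun x => ?_
  rw [abs_of_nonneg (prod_nonneg fun f _ => ind_nonneg _ x)]
  exact prod_le_one (fun f _ => ind_nonneg _ x) fun f _ => ind_le_one _ x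

noncomputable def totalEnergy (H : Finset (Finset J)) (Be B : Finset J → MeasurableSpace Ω) : ℝ :=
  ∑ e ∈ H, ∑ E ∈ univ.filter (MeasurableSet[Be e] ·), energy E (⨆ f ∈ skel e, B f)

variable {H : Finset (Finset J)}

lemma totalEnergy_nonneg : 0 ≤ totalEnergy H Be B :=
  sum_nonneg fun _ _ => sum_nonneg fun _ _ => energy_nonneg _ _

lemma totalEnergy_le {k : ℕ} (hBe : ∀ e ∈ H, complexity (Be e) ≤ k) :
    totalEnergy H Be B ≤ #H * 2 ^ 2 ^ k :=
  calc totalEnergy H Be B ≤ ∑ e ∈ H, (#(univ.filter (MeasurableSet[Be e] ·)) : ℝ) :=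
        sum_le_sum fun e _ => (sum_le_sum fun E _ => energy_le_one E _).trans (by simp)
    _ ≤ ∑ _e ∈ H, (2 ^ 2 ^ k : ℝ) := sum_le_sum fun e he => by
        exact_mod_cast (card_measurableSet_le (Be e)).trans
          (Nat.pow_le_pow_right two_pos (Nat.pow_le_pow_right two_pos (hBe e he)))
    _ = #H * 2 ^ 2 ^ k := by rw [sum_const, nsmul_eq_mul]

lemma totalEnergy_add_le (hB : ∀ f, B f ≤ B' f) (he : e ∈ H) {E : Set Ω}
    (hE : MeasurableSet[Be e] E) {δ : ℝ}
    (h : energy E (⨆ f ∈ skel e, B f) + δ ≤ energy E (⨆ f ∈ skel e, B' f)) :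
    totalEnergy H Be B + δ ≤ totalEnergy H Be B' := by
  have hmono : ∀ e E, energy E (⨆ f ∈ skel e, B f) ≤ energy E (⨆ f ∈ skel e, B' f) :=
    fun e E => energy_mono (iSup₂_mono fun f _ => hB f) E
  exact sum_add_le_sum_of_mem he (fun e _ => sum_le_sum fun E _ => hmono e E)
    (sum_add_le_sum_of_mem (by simpa using hE) (fun E _ => hmono e E) h)

end Refinement

section Hypergraph

variable {J : Type*} [Fintype J] {V : J → Type*} [∀ j, Fintype (V j)]
  {H : Finset (Finset J)} {Be : Finset J → MeasurableSpace (∀ j, V j)}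

lemma disc_le {e : Finset J} {E : Set (∀ j, V j)} {m : MeasurableSpace (∀ j, V j)} {η : ℝ}
    (h : ∀ Ef : Finset J → Set (∀ j, V j), (∀ f ∈ skel e, MeasurableSet[cylAlg V f] (Ef f)) →
      |avg (fun x => (ind E x - cexp m (ind E) x) * ∏ f ∈ skel e, ind (Ef f) x)| ≤ η) :
    disc V e E m ≤ η :=
  csSup_le ⟨_, fun _ => ∅, fun f _ => @MeasurableSet.empty _ (cylAlg V f), rfl⟩
    fun _ ⟨Ef, hEf, hr⟩ => hr ▸ h Ef hEf

lemma exists_lt_abs_avg_of_lt_disc {e : Finset J} {E : Set (∀ j, V j)}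
    {m : MeasurableSpace (∀ j, V j)} {η : ℝ} (hη : η < disc V e E m) :
    ∃ Ef : Finset J → Set (∀ j, V j), (∀ f ∈ skel e, MeasurableSet[cylAlg V f] (Ef f)) ∧
      η < |avg (fun x => (ind E x - cexp m (ind E) x) * ∏ f ∈ skel e, ind (Ef f) x)| := by
  by_contra! h
  exact hη.not_ge (disc_le h)

theorem exists_refinement_disc_le {Φmax : ℝ} (hΦ : ∀ B, totalEnergy H Be B ≤ Φmax) {η : ℝ}
    (hη : 0 < η) {B : Finset J → MeasurableSpace (∀ j, V j)} (hB : ∀ f, B f ≤ cylAlg V f) :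
    ∃ B' : Finset J → MeasurableSpace (∀ j, V j),
      (∀ f, B f ≤ B' f ∧ B' f ≤ cylAlg V f ∧
        complexity (B' f) ≤ complexity (B f) + ⌊Φmax / η ^ 2⌋₊) ∧
      ∀ e ∈ H, ∀ E, MeasurableSet[Be e] E → disc V e E (⨆ f ∈ skel e, B' f) ≤ η := by
  let P : ℕ → (Finset J → MeasurableSpace (∀ j, V j)) → Prop := fun k B' =>
    ∀ f, B f ≤ B' f ∧ B' f ≤ cylAlg V f ∧ complexity (B' f) ≤ complexity (B f) + k
  let Q : (Finset J → MeasurableSpace (∀ j, V j)) → Prop := fun B' =>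
    ∀ e ∈ H, ∀ E, MeasurableSet[Be e] E → disc V e E (⨆ f ∈ skel e, B' f) ≤ η
  have hstep : ∀ k B', P k B' → ¬ Q B' →
      ∃ B'', P (k + 1) B'' ∧ totalEnergy H Be B' + η ^ 2 ≤ totalEnergy H Be B'' := by
    intro k B' hB' hbad
    obtain ⟨e, he, E, hE, hlt⟩ : ∃ e ∈ H, ∃ E, MeasurableSet[Be e] E ∧
        η < disc V e E (⨆ f ∈ skel e, B' f) := by
      simpa [Q] using hbad
    obtain ⟨Ef, hEf, hcorr⟩ := exists_lt_abs_avg_of_lt_disc hlt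
    refine ⟨refineSkel B' e Ef, fun f => ⟨(hB' f).1.trans (le_refineSkel f),
      refineSkel_le (hB' f).2.1 (hEf f), (complexity_refineSkel_le f).trans ?_⟩,
      totalEnergy_add_le (fun f => le_refineSkel f) he hE ?_⟩
    · have := (hB' f).2.2
      omega
    have hsq := pow_le_pow_left₀ hη.le hcorr.le 2
    rw [sq_abs] at hsq
    linarith [sq_avg_add_energy_le_refineSkel (B := B') (e := e) (Ef := Ef) E]
  obtain ⟨k, hk, B', hB', hdisc⟩ := exists_le_floor_div_of_increment (totalEnergy H Be)
    (pow_pos hη 2) hΦ P (fun _ => Q) hstep (fun f => ⟨le_rfl, hB f, le_rfl⟩) totalEnergy_nonneg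
  exact ⟨B', fun f => ⟨(hB' f).1, (hB' f).2.1, (hB' f).2.2.trans (by omega)⟩, hdisc⟩

/-- A round at threshold `1/F(M)` adds at most `⌊Φmax / (1/F(M))²⌋₊` sets to each face. -/
noncomputable def nextComplexity (Φmax : ℝ) (F : ℝ → ℝ) (M : ℝ) : ℝ :=
  M + ⌊Φmax / (1 / F M) ^ 2⌋₊

lemma id_le_nextComplexity (Φmax : ℝ) (F : ℝ → ℝ) : id ≤ nextComplexity Φmax F :=
  fun _ => le_add_of_nonneg_right (Nat.cast_nonneg _)

theorem exists_regular_refinement {Φmax : ℝ} (hΦ : ∀ B, totalEnergy H Be B ≤ Φmax)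
    {F : ℝ → ℝ} (hF : ∀ x, 0 < x → 0 < F x) {M₀ : ℝ} (hM₀ : 0 < M₀) {ε : ℝ} (hε : 0 < ε) :
    ∃ k ≤ ⌊Φmax / ε ^ 2⌋₊, ∃ B B' : Finset J → MeasurableSpace (∀ j, V j),
      (∀ f, B f ≤ B' f ∧ B' f ≤ cylAlg V f ∧
        (complexity (B f) : ℝ) ≤ (nextComplexity Φmax F)^[k] M₀) ∧
      ∀ e ∈ H, ∀ E, MeasurableSet[Be e] E →
        energy E (⨆ f ∈ skel e, B' f) - energy E (⨆ f ∈ skel e, B f) ≤ ε ^ 2 ∧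
        disc V e E (⨆ f ∈ skel e, B' f) ≤ 1 / F ((nextComplexity Φmax F)^[k] M₀) := by
  let M : ℕ → ℝ := fun k => (nextComplexity Φmax F)^[k] M₀
  let P : ℕ → (Finset J → MeasurableSpace (∀ j, V j)) → Prop := fun k B =>
    (∀ f, B f ≤ cylAlg V f) ∧ ∀ f, (complexity (B f) : ℝ) ≤ M k
  let Q : ℕ → (Finset J → MeasurableSpace (∀ j, V j)) → Prop := fun k B =>
    ∃ B' : Finset J → MeasurableSpace (∀ j, V j), (∀ f, B f ≤ B' f ∧ B' f ≤ cylAlg V f) ∧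
      ∀ e ∈ H, ∀ E, MeasurableSet[Be e] E →
        energy E (⨆ f ∈ skel e, B' f) - energy E (⨆ f ∈ skel e, B f) ≤ ε ^ 2 ∧
        disc V e E (⨆ f ∈ skel e, B' f) ≤ 1 / F (M k)
  have hstep : ∀ k B, P k B → ¬ Q k B →
      ∃ B', P (k + 1) B' ∧ totalEnergy H Be B + ε ^ 2 ≤ totalEnergy H Be B' := by
    rintro k B ⟨hBA, hBc⟩ hbad
    have hFM : 0 < F (M k) :=
      hF _ (hM₀.trans_le (Function.id_le_iterate_of_id_le (id_le_nextComplexity Φmax F) k M₀))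
    obtain ⟨B', hB', hdisc⟩ := exists_refinement_disc_le hΦ (one_div_pos.2 hFM) hBA
    obtain ⟨e, he, E, hE, hgap⟩ : ∃ e ∈ H, ∃ E, MeasurableSet[Be e] E ∧
        ε ^ 2 < energy E (⨆ f ∈ skel e, B' f) - energy E (⨆ f ∈ skel e, B f) := by
      by_contra! hsmall
      exact hbad ⟨B', fun f => ⟨(hB' f).1, (hB' f).2.1⟩,
        fun e he E hE => ⟨hsmall e he E hE, hdisc e he E hE⟩⟩
    refine ⟨B', ⟨fun f => (hB' f).2.1, fun f => ?_⟩,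
      totalEnergy_add_le (fun f => (hB' f).1) he hE (by linarith)⟩
    have hM : M (k + 1) = M k + ⌊Φmax / (1 / F (M k)) ^ 2⌋₊ :=
      Function.iterate_succ_apply' _ _ _
    have := (hB' f).2.2
    rw [hM]
    calc (complexity (B' f) : ℝ) ≤ complexity (B f) + ⌊Φmax / (1 / F (M k)) ^ 2⌋₊ := by
          exact_mod_cast this
      _ ≤ _ := by linarith [hBc f]
  obtain ⟨k, hk, B, ⟨-, hBc⟩, B', hB', hgood⟩ := exists_le_floor_div_of_increment
    (totalEnergy H Be) (pow_pos hε 2) hΦ P Q hstep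
    ⟨fun _ => bot_le, fun _ => by simp [M, complexity_bot, hM₀.le]⟩ totalEnergy_nonneg
  exact ⟨k, hk, B, B', fun f => ⟨(hB' f).1, (hB' f).2, hBc f⟩, hgood⟩

end Hypergraph

/-- **Preliminary regularity lemma.**
For every `n`, `m > 0`, `ε > 0` and growth function `F` there is `C = C(n, ε, m, F)` such
that: given σ-algebras `B_e ⊆ A_e` (`e ∈ H_d`) of complexity at most `m`, there exist
`M` with `F(m) ≤ M ≤ C` and σ-algebras `B_f ⊆ B'_f ⊆ A_f` (`f ∈ ∂H_d`) such that the
coarse `B_f` have complexity at most `M`, the energies of the fine and the coarse joins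
differ by at most `ε²` on every set of every `B_e`, and every set of every `B_e` has
discrepancy at most `1/F(M)` with respect to the fine join. -/
theorem preliminary_regularity_lemma :
    ∀ n : ℕ, 0 < n → ∀ m ε : ℝ, 0 < m → 0 < ε → ∀ F : ℝ → ℝ, IsGrowth F →
    ∃ C : ℝ, 0 < C ∧
    ∀ (J : Type) [Fintype J], Fintype.card J ≤ n →
    ∀ (V : J → Type) [∀ j, Fintype (V j)] [∀ j, Nonempty (V j)]
      (d : ℕ), 1 ≤ d →
    ∀ (H : Finset (Finset J)), (∀ e ∈ H, e.card = d) →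
    ∀ (Be : Finset J → MeasurableSpace (∀ j, V j)),
      (∀ e ∈ H, Be e ≤ cylAlg V e ∧ (complexity (Be e) : ℝ) ≤ m) →
    ∃ M : ℝ, F m ≤ M ∧ M ≤ C ∧
    ∃ B B' : Finset J → MeasurableSpace (∀ j, V j),
      (∀ f ∈ hbd H, B f ≤ B' f ∧ B' f ≤ cylAlg V f ∧ (complexity (B f) : ℝ) ≤ M) ∧
      (∀ e ∈ H, ∀ E : Set (∀ j, V j), MeasurableSet[Be e] E →
        energy E (⨆ f ∈ skel e, B' f) - energy E (⨆ f ∈ skel e, B f) ≤ ε ^ 2 ∧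
        disc V e E (⨆ f ∈ skel e, B' f) ≤ 1 / F M) := by
  rintro n - m ε hm hε F ⟨-, hF⟩
  set Φmax : ℝ := 2 ^ n * 2 ^ 2 ^ ⌊m⌋₊
  have hFm : 0 < F m := by linarith [hF m hm]
  have hgrow := id_le_nextComplexity Φmax F
  refine ⟨(nextComplexity Φmax F)^[⌊Φmax / ε ^ 2⌋₊] (F m),
    hFm.trans_le (Function.id_le_iterate_of_id_le hgrow _ _), ?_⟩
  intro J _ hJ V _ _ _ _ H _ Be hBe
  have hH : (#H : ℝ) ≤ 2 ^ n := by
    exact_mod_cast (card_le_univ H).trans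
      (Fintype.card_finset (α := J) ▸ Nat.pow_le_pow_right two_pos hJ)
  have hΦ : ∀ B, totalEnergy H Be B ≤ Φmax := fun B =>
    (totalEnergy_le fun e he => Nat.le_floor (hBe e he).2).trans
      (mul_le_mul_of_nonneg_right hH (by positivity))
  obtain ⟨k, hk, B, B', hBB', hgood⟩ :=
    exists_regular_refinement hΦ (F := F) (fun x hx => by linarith [hF x hx]) hFm hε
  exact ⟨_, Function.id_le_iterate_of_id_le hgrow k (F m),
    Function.monotone_iterate_of_id_le hgrow hk (F m), B, B', fun f _ => hBB' f, hgood⟩
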